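/- arXiv:1103.0502 — 3 statements merged into one kernel-verified Lean document; each statement's English description precedes it below -/
import Mathlib

section
/- Let γ be a nonnegative absolutely continuous random variable with CDF F. Then for every p > 0, E[Q(√(p γ))] = (√p / (2√(2π))) ∫_0^∞ e^{-pt/2} F(t) t^{-1/2} dt. -/
open MeasureTheory Real intervalIntegral

/-- The Gaussian Q-function. -/
noncomputable def gaussQ (x : ℝ) : ℝ :=
  (Real.sqrt (2 * Real.pi))⁻¹ * ∫ t in Set.Ioi x, Real.exp (-t ^ 2 / 2)

/-!
The substitution `s = √(p t)` writes `Q(√(p x))` as the tail integral `∫_{t > x} k t dt` of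
`k t = √p / (2√(2π)) · e^{-pt/2} t^{-1/2}`. The left side is then the integral of `f x · k t` over
`0 < x < t`, and integrating in the other order (Tonelli) gives `∫_0^∞ k t · F t dt`; this replaces
the integration by parts and leaves no boundary terms to control.
-/

open Set
open scoped ENNReal

section Tonelli

variable {α : Type*} [TopologicalSpace α] [LinearOrder α] [OrderClosedTopology α]
  [SecondCountableTopology α] [MeasurableSpace α] [OpensMeasurableSpace α]
  {μ : Measure α} [SFinite μ]

theorem lintegral_mul_setLIntegral_Ioi_eq {f g : α → ℝ≥0∞} (hf : AEMeasurable f μ)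
    (hg : AEMeasurable g μ) :
    ∫⁻ x, f x * ∫⁻ t in Ioi x, g t ∂μ ∂μ = ∫⁻ t, g t * ∫⁻ x in Iio t, f x ∂μ ∂μ := by
  set H : α × α → ℝ≥0∞ := {q | q.1 < q.2}.indicator fun q => f q.1 * g q.2
  have hH : AEMeasurable H (μ.prod μ) :=
    (hf.comp_fst.mul hg.comp_snd).indicator (measurableSet_lt measurable_fst measurable_snd)
  calc ∫⁻ x, f x * ∫⁻ t in Ioi x, g t ∂μ ∂μ = ∫⁻ x, ∫⁻ t, H (x, t) ∂μ ∂μ := by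
        refine lintegral_congr fun x => ?_
        rw [← lintegral_indicator measurableSet_Ioi,
          ← lintegral_const_mul'' _ (hg.indicator measurableSet_Ioi)]
        refine lintegral_congr fun t => ?_
        by_cases h : x < t <;> simp [H, h]
    _ = ∫⁻ t, ∫⁻ x, H (x, t) ∂μ ∂μ := lintegral_lintegral_swap hH
    _ = ∫⁻ t, g t * ∫⁻ x in Iio t, f x ∂μ ∂μ := by
        refine lintegral_congr fun t => ?_
        rw [← lintegral_indicator measurableSet_Iio,
          ← lintegral_const_mul'' _ (hf.indicator measurableSet_Iio)]
        refine lintegral_congr fun x => ?_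
        by_cases h : x < t <;> simp [H, h, mul_comm]

end Tonelli

section TailIntegral

variable {f g : ℝ → ℝ} {a : ℝ}

theorem monotoneOn_intervalIntegral_of_nonneg (hf : IntegrableOn f (Ioi a))
    (hf0 : ∀ x ∈ Ioi a, 0 ≤ f x) : MonotoneOn (fun t => ∫ x in a..t, f x) (Ici a) :=
  fun _ hs _ _ hst => integral_mono_interval le_rfl hs hst
    ((ae_restrict_iff' measurableSet_Ioc).2 (ae_of_all _ fun x hx => hf0 x hx.1))
    ((intervalIntegrable_iff_integrableOn_Ioc_of_le (hs.trans hst)).2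
      (hf.mono_set Ioc_subset_Ioi_self))

theorem antitoneOn_setIntegral_Ioi_of_nonneg (hg : IntegrableOn g (Ioi a))
    (hg0 : ∀ t ∈ Ioi a, 0 ≤ g t) : AntitoneOn (fun x => ∫ t in Ioi x, g t) (Ici a) :=
  fun _ hs _ _ hst => setIntegral_mono_set (hg.mono_set (Ioi_subset_Ioi hs))
    ((ae_restrict_iff' measurableSet_Ioi).2
      (ae_of_all _ fun t ht => hg0 t (mem_Ioi.2 (lt_of_le_of_lt hs ht))))
    (Ioi_subset_Ioi hst).eventuallyLE

theorem ofReal_setIntegral_Ioi_eq_setLIntegral (hg : IntegrableOn g (Ioi a))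
    (hg0 : ∀ t ∈ Ioi a, 0 ≤ g t) {x : ℝ} (hx : x ∈ Ioi a) :
    ENNReal.ofReal (∫ t in Ioi x, g t) =
      ∫⁻ t in Ioi x, ENNReal.ofReal (g t) ∂volume.restrict (Ioi a) := by
  rw [Measure.restrict_restrict_of_subset (Ioi_subset_Ioi hx.le),
    ofReal_integral_eq_lintegral_ofReal (hg.mono_set (Ioi_subset_Ioi hx.le))
      ((ae_restrict_iff' measurableSet_Ioi).2
        (ae_of_all _ fun t ht => hg0 t (mem_Ioi.2 (hx.trans ht))))]

theorem ofReal_intervalIntegral_eq_setLIntegral_Iio (hf : IntegrableOn f (Ioi a))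
    (hf0 : ∀ x ∈ Ioi a, 0 ≤ f x) {t : ℝ} (ht : t ∈ Ioi a) :
    ENNReal.ofReal (∫ x in a..t, f x) =
      ∫⁻ x in Iio t, ENNReal.ofReal (f x) ∂volume.restrict (Ioi a) := by
  rw [Measure.restrict_restrict measurableSet_Iio, Iio_inter_Ioi,
    Measure.restrict_congr_set Ioo_ae_eq_Ioc, integral_of_le ht.le,
    ofReal_integral_eq_lintegral_ofReal (hf.mono_set Ioc_subset_Ioi_self)
      ((ae_restrict_iff' measurableSet_Ioc).2 (ae_of_all _ fun x hx => hf0 x hx.1))]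

theorem setIntegral_tail_mul_eq_setIntegral_mul_primitive (hf : IntegrableOn f (Ioi a))
    (hg : IntegrableOn g (Ioi a)) (hf0 : ∀ x ∈ Ioi a, 0 ≤ f x) (hg0 : ∀ t ∈ Ioi a, 0 ≤ g t) :
    ∫ x in Ioi a, (∫ t in Ioi x, g t) * f x = ∫ t in Ioi a, g t * ∫ x in a..t, f x := by
  set μ := volume.restrict (Ioi a)
  have tail_nonneg : ∀ x ∈ Ioi a, 0 ≤ ∫ t in Ioi x, g t := fun x hx =>
    setIntegral_nonneg measurableSet_Ioi fun t ht => hg0 t (mem_Ioi.2 (hx.trans ht))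
  have primitive_nonneg : ∀ t ∈ Ioi a, 0 ≤ ∫ x in a..t, f x := fun t ht => by
    simpa using monotoneOn_intervalIntegral_of_nonneg hf hf0 self_mem_Ici (mem_Ici.2 ht.le) ht.le
  have lhs_nonneg : 0 ≤ᵐ[μ] fun x => (∫ t in Ioi x, g t) * f x :=
    (ae_restrict_iff' measurableSet_Ioi).2
      (ae_of_all _ fun x hx => mul_nonneg (tail_nonneg x hx) (hf0 x hx))
  have rhs_nonneg : 0 ≤ᵐ[μ] fun t => g t * ∫ x in a..t, f x :=
    (ae_restrict_iff' measurableSet_Ioi).2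
      (ae_of_all _ fun t ht => mul_nonneg (hg0 t ht) (primitive_nonneg t ht))
  have lhs_meas : AEStronglyMeasurable (fun x => (∫ t in Ioi x, g t) * f x) μ :=
    ((aemeasurable_restrict_of_antitoneOn measurableSet_Ioi
      ((antitoneOn_setIntegral_Ioi_of_nonneg hg hg0).mono Ioi_subset_Ici_self)).mul
      hf.aemeasurable).aestronglyMeasurable
  have rhs_meas : AEStronglyMeasurable (fun t => g t * ∫ x in a..t, f x) μ :=
    (hg.aemeasurable.mul (aemeasurable_restrict_of_monotoneOn measurableSet_Ioi
      ((monotoneOn_intervalIntegral_of_nonneg hf hf0).mono Ioi_subset_Ici_self))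
      ).aestronglyMeasurable
  -- Both sides are `toReal` of lintegrals even when infinite, so Tonelli can be applied there.
  rw [integral_eq_lintegral_of_nonneg_ae lhs_nonneg lhs_meas,
    integral_eq_lintegral_of_nonneg_ae rhs_nonneg rhs_meas]
  congr 1
  calc ∫⁻ x, ENNReal.ofReal ((∫ t in Ioi x, g t) * f x) ∂μ
      = ∫⁻ x, ENNReal.ofReal (f x) * ∫⁻ t in Ioi x, ENNReal.ofReal (g t) ∂μ ∂μ := by
        refine setLIntegral_congr_fun measurableSet_Ioi fun x hx => ?_
        rw [ENNReal.ofReal_mul (tail_nonneg x hx),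
          ofReal_setIntegral_Ioi_eq_setLIntegral hg hg0 hx, mul_comm]
    _ = ∫⁻ t, ENNReal.ofReal (g t) * ∫⁻ x in Iio t, ENNReal.ofReal (f x) ∂μ ∂μ :=
        lintegral_mul_setLIntegral_Ioi_eq hf.aemeasurable.ennreal_ofReal
          hg.aemeasurable.ennreal_ofReal
    _ = ∫⁻ t, ENNReal.ofReal (g t * ∫ x in a..t, f x) ∂μ := by
        refine setLIntegral_congr_fun measurableSet_Ioi fun t ht => ?_
        rw [ENNReal.ofReal_mul (hg0 t ht), ofReal_intervalIntegral_eq_setLIntegral_Iio hf hf0 ht]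

end TailIntegral

theorem image_const_mul_sqrt_Ioi {c x : ℝ} (hc : 0 < c) (hx : 0 ≤ x) :
    (fun t => c * √t) '' Ioi x = Ioi (c * √x) := by
  ext s
  constructor
  · rintro ⟨t, ht, rfl⟩
    exact mul_lt_mul_of_pos_left (sqrt_lt_sqrt hx ht) hc
  · intro hs
    have hs0 : 0 < s / c := div_pos ((mul_nonneg hc.le (sqrt_nonneg x)).trans_lt hs) hc
    refine ⟨(s / c) ^ 2, (sqrt_lt' hs0).1 ((lt_div_iff₀' hc).2 hs), ?_⟩
    simp only [sqrt_sq hs0.le, mul_div_cancel₀ _ hc.ne']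

theorem gaussQ_sqrt_mul {p x : ℝ} (hp : 0 < p) (hx : 0 ≤ x) :
    gaussQ (√(p * x)) = √p / (2 * √(2 * π)) *
      ∫ t in Ioi x, exp (-(p * t) / 2) * t ^ (-(1 : ℝ) / 2) := by
  have hsp : 0 < √p := sqrt_pos.2 hp
  have hderiv : ∀ t ∈ Ioi x,
      HasDerivWithinAt (fun t => √p * √t) (√p * (1 / (2 * √t))) (Ioi x) t :=
    fun t ht => ((hasDerivAt_sqrt (hx.trans_lt ht).ne').const_mul √p).hasDerivWithinAt
  have hinj : InjOn (fun t => √p * √t) (Ioi x) := fun s hs t ht hst =>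
    (sqrt_inj (hx.trans hs.le) (hx.trans ht.le)).1 (mul_left_cancel₀ hsp.ne' hst)
  rw [gaussQ, sqrt_mul hp.le, ← image_const_mul_sqrt_Ioi hsp hx,
    integral_image_eq_integral_abs_deriv_smul measurableSet_Ioi hderiv hinj,
    ← MeasureTheory.integral_const_mul, ← MeasureTheory.integral_const_mul]
  refine setIntegral_congr_fun measurableSet_Ioi fun t ht => ?_
  have ht0 : 0 < t := hx.trans_lt ht
  have hst : 0 < √t := sqrt_pos.2 ht0
  rw [smul_eq_mul, abs_of_pos (by positivity), mul_pow, sq_sqrt hp.le, sq_sqrt ht0.le,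
    neg_div (2 : ℝ) 1, rpow_neg ht0.le, ← sqrt_eq_rpow]
  field_simp

theorem integrableOn_exp_neg_mul_div_two_mul_rpow {p : ℝ} (hp : 0 < p) :
    IntegrableOn (fun t => exp (-(p * t) / 2) * t ^ (-(1 : ℝ) / 2)) (Ioi 0) := by
  refine (integrableOn_rpow_mul_exp_neg_mul_rpow (s := -(1 : ℝ) / 2) (by norm_num) one_pos
    (half_pos hp)).congr_fun (fun t _ => ?_) measurableSet_Ioi
  simp only [rpow_one]
  ring_nf

theorem stmt5_general (f : ℝ → ℝ) (hfpos : ∀ t, 0 ≤ f t)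
    (hfint : IntegrableOn f (Set.Ioi 0))
    (F : ℝ → ℝ) (hF : ∀ t, F t = ∫ u in (0 : ℝ)..t, f u)
    (p : ℝ) (hp : 0 < p) :
    (∫ x in Set.Ioi (0 : ℝ), gaussQ (Real.sqrt (p * x)) * f x) =
      (Real.sqrt p / (2 * Real.sqrt (2 * Real.pi))) *
        ∫ t in Set.Ioi (0 : ℝ), Real.exp (-(p * t) / 2) * F t * t ^ (-(1 : ℝ) / 2) := by
  set k : ℝ → ℝ := fun t => exp (-(p * t) / 2) * t ^ (-(1 : ℝ) / 2)
  have hk0 : ∀ t ∈ Ioi (0 : ℝ), 0 ≤ k t := fun t ht =>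
    mul_nonneg (exp_pos _).le (rpow_nonneg (le_of_lt ht) _)
  calc (∫ x in Ioi 0, gaussQ (√(p * x)) * f x)
      = ∫ x in Ioi 0, √p / (2 * √(2 * π)) * ((∫ t in Ioi x, k t) * f x) := by
        refine setIntegral_congr_fun measurableSet_Ioi fun x hx => ?_
        rw [gaussQ_sqrt_mul hp (le_of_lt hx), mul_assoc]
    _ = √p / (2 * √(2 * π)) * ∫ t in Ioi 0, k t * ∫ x in 0..t, f x := by
        rw [MeasureTheory.integral_const_mul,
          setIntegral_tail_mul_eq_setIntegral_mul_primitive hfint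
          (integrableOn_exp_neg_mul_div_two_mul_rpow hp) (fun x _ => hfpos x) hk0]
    _ = _ := by
        congr 1
        refine setIntegral_congr_fun measurableSet_Ioi fun t _ => ?_
        rw [hF, mul_right_comm]

theorem stmt5 (f : ℝ → ℝ) (hfmeas : Measurable f) (hfpos : ∀ t, 0 ≤ f t)
    (hfint : IntegrableOn f (Set.Ioi 0))
    (hfprob : (∫ t in Set.Ioi (0 : ℝ), f t) = 1)
    (F : ℝ → ℝ) (hF : ∀ t, F t = ∫ u in (0 : ℝ)..t, f u)
    (p : ℝ) (hp : 0 < p) :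
    (∫ x in Set.Ioi (0 : ℝ), gaussQ (Real.sqrt (p * x)) * f x) =
      (Real.sqrt p / (2 * Real.sqrt (2 * Real.pi))) *
        ∫ t in Set.Ioi (0 : ℝ), Real.exp (-(p * t) / 2) * F t * t ^ (-(1 : ℝ) / 2) :=
  stmt5_general f hfpos hfint F hF p hp
end

section
/- Let a > 0, b > 0 and p > 0, and let γ be Gamma-distributed with shape b and rate a. Then E[Q(√(p γ))] = (1/(2π)) a^b (2/p)^b ∫_0^1 u^{b-1/2} (1-u)^{-1/2} (1 + (2a/p) u)^{-b} du. -/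
section CraigHelpers
open MeasureTheory Real Set Filter

lemma lemA (c : ℝ) : ∫ r in Set.Ioi c, r * Real.exp (-r ^ 2 / 2) = Real.exp (-c ^ 2 / 2) := by
  have A : ∀ x : ℝ, HasDerivAt (fun r => -Real.exp (-r ^ 2 / 2)) (x * Real.exp (-x ^ 2 / 2)) x := by
    intro x
    have h1 : HasDerivAt (fun r : ℝ => -r ^ 2 / 2) (-x) x := by
      have := (hasDerivAt_pow 2 x).neg.div_const 2
      simpa using this.congr_deriv (by push_cast; ring)
    have := (h1.exp).neg
    exact this.congr_deriv (by ring)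
  have B : Tendsto (fun r : ℝ => -Real.exp (-r ^ 2 / 2)) atTop (nhds 0) := by
    rw [show (0:ℝ) = -0 by ring]
    refine (Tendsto.neg ?_)
    apply Real.tendsto_exp_atBot.comp
    apply Tendsto.atBot_div_const (by norm_num)
    exact tendsto_neg_atBot_iff.mpr (tendsto_pow_atTop two_ne_zero)
  have hint : IntegrableOn (fun r : ℝ => r * Real.exp (-r ^ 2 / 2)) (Set.Ioi c) := by
    have := (integrable_mul_exp_neg_mul_sq (b := 1/2) (by norm_num)).integrableOn (s := Set.Ioi c)
    refine this.congr_fun (fun x _ => by ring_nf) measurableSet_Ioi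
  have := integral_Ioi_of_hasDerivAt_of_tendsto' (f := fun r => -Real.exp (-r ^ 2 / 2))
    (fun x _ => A x) hint B
  rw [this]; ring

lemma lemB : ∫ z in Set.Ioi (0:ℝ), Real.exp (-z ^ 2 / 2) = Real.sqrt (2 * Real.pi) / 2 := by
  have h := integral_comp_abs (f := fun x : ℝ => Real.exp (-x ^ 2 / 2))
  have h2 : (∫ x : ℝ, Real.exp (-|x| ^ 2 / 2)) = Real.sqrt (2 * Real.pi) := by
    have := integral_gaussian (1/2)
    rw [show Real.pi / (1/2) = 2 * Real.pi by ring] at this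
    rw [← this]
    congr 1 with x
    rw [sq_abs]; ring_nf
  rw [h2] at h
  linarith

noncomputable def craigPhi : ℝ × ℝ → ℝ × ℝ := fun q => (q.2 * Real.sqrt q.1, q.2 * Real.sqrt (1 - q.1))

noncomputable def craigPhiD : ℝ × ℝ → (ℝ × ℝ) →L[ℝ] (ℝ × ℝ) := fun q =>
  LinearMap.toContinuousLinearMap (Matrix.toLin (Module.Basis.finTwoProd ℝ) (Module.Basis.finTwoProd ℝ)
    !![q.2 / (2 * Real.sqrt q.1), Real.sqrt q.1;
       -(q.2 / (2 * Real.sqrt (1 - q.1))), Real.sqrt (1 - q.1)])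

lemma craigPhi_hasFDerivAt {q : ℝ × ℝ} (hu0 : 0 < q.1) (hu1 : q.1 < 1) :
    HasFDerivAt craigPhi (craigPhiD q) q := by
  obtain ⟨u, r⟩ := q
  simp only [mem_Ioo] at hu0 hu1
  unfold craigPhi craigPhiD
  rw [Matrix.toLin_finTwoProd_toContinuousLinearMap]
  have h1 : HasFDerivAt (fun q : ℝ × ℝ => Real.sqrt q.1)
      ((1 / (2 * Real.sqrt u)) • ContinuousLinearMap.fst ℝ ℝ ℝ) (u, r) :=
    (Real.hasDerivAt_sqrt (ne_of_gt hu0)).comp_hasFDerivAt (u, r) hasFDerivAt_fst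
  have h2' : HasDerivAt (fun t : ℝ => Real.sqrt (1 - t)) (-(1 / (2 * Real.sqrt (1 - u)))) u := by
    have hin : HasDerivAt (fun t : ℝ => 1 - t) (-1) u := by
      simpa using (hasDerivAt_id u).const_sub 1
    have := (Real.hasDerivAt_sqrt (by linarith : (1:ℝ) - u ≠ 0)).comp u hin
    exact this.congr_deriv (by ring)
  have h2 : HasFDerivAt (fun q : ℝ × ℝ => Real.sqrt (1 - q.1))
      ((-(1 / (2 * Real.sqrt (1 - u)))) • ContinuousLinearMap.fst ℝ ℝ ℝ) (u, r) :=
    h2'.comp_hasFDerivAt (f := Prod.fst) (u, r) hasFDerivAt_fst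
  have hsnd : HasFDerivAt (fun q : ℝ × ℝ => q.2) (ContinuousLinearMap.snd ℝ ℝ ℝ) (u, r) :=
    hasFDerivAt_snd
  have H1 := hsnd.mul h1
  have H2 := hsnd.mul h2
  rw [smul_smul, show r * (1 / (2 * Real.sqrt u)) = r / (2 * Real.sqrt u) by ring] at H1
  rw [smul_smul, show r * -(1 / (2 * Real.sqrt (1 - u))) = -(r / (2 * Real.sqrt (1 - u))) by ring]
    at H2
  exact HasFDerivAt.prodMk H1 H2

lemma craigPhiD_det {q : ℝ × ℝ} (hu0 : 0 < q.1) (hu1 : q.1 < 1) :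
    (craigPhiD q).det = q.2 / (2 * Real.sqrt q.1 * Real.sqrt (1 - q.1)) := by
  have h1 : Real.sqrt q.1 ≠ 0 := by positivity
  have h2 : Real.sqrt (1 - q.1) ≠ 0 := by
    have : (0:ℝ) < 1 - q.1 := by linarith
    positivity
  have e1 : Real.sqrt q.1 * Real.sqrt q.1 = q.1 := Real.mul_self_sqrt hu0.le
  have e2 : Real.sqrt (1 - q.1) * Real.sqrt (1 - q.1) = 1 - q.1 :=
    Real.mul_self_sqrt (by linarith)
  simp only [craigPhiD, LinearMap.det_toContinuousLinearMap, LinearMap.det_toLin,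
    Matrix.det_fin_two_of]
  field_simp
  linear_combination q.2 * e1 + q.2 * e2


noncomputable def craigG : ℝ × ℝ → ℝ := fun p => Real.exp (-(p.1 ^ 2 + p.2 ^ 2) / 2)

noncomputable def craigF : ℝ × ℝ → ℝ := fun q =>
  q.2 * Real.exp (-q.2 ^ 2 / 2) / (2 * Real.sqrt q.1 * Real.sqrt (1 - q.1))

lemma gauss_integrable : Integrable (fun t : ℝ => Real.exp (-t ^ 2 / 2)) := by
  have := integrable_exp_neg_mul_sq (b := 1/2) (by norm_num)
  exact this.congr (by filter_upwards with x; ring_nf)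

lemma craigG_eq (p : ℝ × ℝ) :
    craigG p = Real.exp (-p.1 ^ 2 / 2) * Real.exp (-p.2 ^ 2 / 2) := by
  rw [craigG, ← Real.exp_add]; ring_nf

lemma craig {y : ℝ} (hy : 0 < y) :
    ∫ t in Set.Ioi y, Real.exp (-t ^ 2 / 2) =
      (Real.sqrt (2 * Real.pi))⁻¹ *
        ∫ u in Set.Ioo (0:ℝ) 1,
          Real.exp (-y ^ 2 / (2 * u)) / (Real.sqrt u * Real.sqrt (1 - u)) := by
  classical
  set s : Set (ℝ × ℝ) := {q | (0 < q.1 ∧ q.1 < 1) ∧ y < q.2 * Real.sqrt q.1} with hs_def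
  have hs : MeasurableSet s := by
    have h1 : MeasurableSet {q : ℝ × ℝ | 0 < q.1} :=
      measurableSet_lt measurable_const measurable_fst
    have h2 : MeasurableSet {q : ℝ × ℝ | q.1 < 1} :=
      measurableSet_lt measurable_fst measurable_const
    have h3 : MeasurableSet {q : ℝ × ℝ | y < q.2 * Real.sqrt q.1} :=
      measurableSet_lt measurable_const
        (measurable_snd.mul (Real.continuous_sqrt.measurable.comp measurable_fst))
    have he : s = ({q : ℝ × ℝ | 0 < q.1} ∩ {q | q.1 < 1}) ∩ {q | y < q.2 * Real.sqrt q.1} := by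
      ext q
      exact ⟨fun ⟨⟨a, b⟩, c⟩ => ⟨⟨a, b⟩, c⟩, fun ⟨⟨a, b⟩, c⟩ => ⟨⟨a, b⟩, c⟩⟩
    rw [he]; exact (h1.inter h2).inter h3
  have hr_pos : ∀ q ∈ s, 0 < q.2 := by
    rintro ⟨u, r⟩ ⟨⟨hu0, hu1⟩, hyr⟩
    by_contra hr
    push_neg at hr
    have : r * Real.sqrt u ≤ 0 := mul_nonpos_iff.mpr (Or.inr ⟨hr, Real.sqrt_nonneg u⟩)
    linarith
  have hf' : ∀ q ∈ s, HasFDerivWithinAt craigPhi (craigPhiD q) s q := fun q hq =>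
    (craigPhi_hasFDerivAt hq.1.1 hq.1.2).hasFDerivWithinAt
  have hinj : Set.InjOn craigPhi s := by
    rintro ⟨u, r⟩ hq ⟨u', r'⟩ hq' heq
    have hr : 0 < r := hr_pos _ hq
    have hr' : 0 < r' := hr_pos _ hq'
    obtain ⟨⟨hu0, hu1⟩, -⟩ := hq
    obtain ⟨⟨hu0', hu1'⟩, -⟩ := hq'
    rw [craigPhi, craigPhi, Prod.mk.injEq] at heq
    obtain ⟨h1, h2⟩ := heq
    have e1 : r ^ 2 * u = r' ^ 2 * u' := by
      have := congrArg (fun t => t ^ 2) h1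
      simpa only [mul_pow, Real.sq_sqrt hu0.le, Real.sq_sqrt hu0'.le] using this
    have e2 : r ^ 2 * (1 - u) = r' ^ 2 * (1 - u') := by
      have := congrArg (fun t => t ^ 2) h2
      simpa only [mul_pow, Real.sq_sqrt (by linarith : (0:ℝ) ≤ 1 - u),
        Real.sq_sqrt (by linarith : (0:ℝ) ≤ 1 - u')] using this
    have e3 : r ^ 2 = r' ^ 2 := by linear_combination e1 + e2
    have hrr : r = r' := (sq_eq_sq₀ hr.le hr'.le).mp e3
    subst hrr
    have huu : u = u' := mul_left_cancel₀ (pow_ne_zero 2 hr.ne') e1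
    simp [huu]
  have himage : craigPhi '' s = Set.Ioi y ×ˢ Set.Ioi (0:ℝ) := by
    ext p
    simp only [Set.mem_image, Set.mem_prod, Set.mem_Ioi]
    constructor
    · rintro ⟨⟨u, r⟩, hq, rfl⟩
      have hr : 0 < r := hr_pos _ hq
      obtain ⟨⟨hu0, hu1⟩, hyr⟩ := hq
      exact ⟨hyr, mul_pos hr (Real.sqrt_pos.mpr (by linarith))⟩
    · obtain ⟨x, z⟩ := p
      rintro ⟨hx, hz⟩
      have hx0 : 0 < x := lt_trans hy hx
      have hS : 0 < x ^ 2 + z ^ 2 := by positivity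
      have hsS : 0 < Real.sqrt (x ^ 2 + z ^ 2) := Real.sqrt_pos.mpr hS
      have key : ∀ c : ℝ, 0 < c →
          Real.sqrt (x ^ 2 + z ^ 2) * Real.sqrt (c ^ 2 / (x ^ 2 + z ^ 2)) = c := by
        intro c hc
        rw [Real.sqrt_div (sq_nonneg c), Real.sqrt_sq hc.le,
          mul_div_cancel₀ _ hsS.ne']
      refine ⟨(x ^ 2 / (x ^ 2 + z ^ 2), Real.sqrt (x ^ 2 + z ^ 2)), ⟨⟨?_, ?_⟩, ?_⟩, ?_⟩
      · positivity
      · rw [div_lt_one hS]; nlinarith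
      · rw [key x hx0]; exact hx
      · rw [craigPhi]
        have h1mu : 1 - x ^ 2 / (x ^ 2 + z ^ 2) = z ^ 2 / (x ^ 2 + z ^ 2) := by
          field_simp
          ring
        simp only [h1mu, key x hx0, key z hz]
  have key := integral_image_eq_integral_abs_det_fderiv_smul volume hs hf' hinj craigG
  have hprodint : IntegrableOn craigG (Set.Ioi y ×ˢ Set.Ioi (0:ℝ)) := by
    rw [IntegrableOn, Measure.volume_eq_prod, ← Measure.prod_restrict]
    have := (gauss_integrable.integrableOn (s := Set.Ioi y)).mul_prod
      (gauss_integrable.integrableOn (s := Set.Ioi (0:ℝ)))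
    exact this.congr (Filter.Eventually.of_forall fun p => (craigG_eq p).symm)
  have hglhs : ∫ p in Set.Ioi y ×ˢ Set.Ioi (0:ℝ), craigG p =
      (∫ t in Set.Ioi y, Real.exp (-t ^ 2 / 2)) * (Real.sqrt (2 * Real.pi) / 2) := by
    calc ∫ p in Set.Ioi y ×ˢ Set.Ioi (0:ℝ), craigG p
        = ∫ p in Set.Ioi y ×ˢ Set.Ioi (0:ℝ),
            Real.exp (-p.1 ^ 2 / 2) * Real.exp (-p.2 ^ 2 / 2) :=
          setIntegral_congr_fun (measurableSet_Ioi.prod measurableSet_Ioi)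
            (fun p _ => craigG_eq p)
      _ = (∫ t in Set.Ioi y, Real.exp (-t ^ 2 / 2)) *
            ∫ z in Set.Ioi (0:ℝ), Real.exp (-z ^ 2 / 2) := by
          rw [Measure.volume_eq_prod]
          exact setIntegral_prod_mul (fun t : ℝ => Real.exp (-t ^ 2 / 2))
            (fun z : ℝ => Real.exp (-z ^ 2 / 2)) _ _
      _ = _ := by rw [lemB]
  have hcongr : ∀ q ∈ s, |(craigPhiD q).det| • craigG (craigPhi q) = craigF q := by
    rintro ⟨u, r⟩ hq
    have hr : 0 < r := hr_pos _ hq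
    obtain ⟨⟨hu0, hu1⟩, -⟩ := hq
    rw [craigPhiD_det hu0 hu1]
    have hdn : (0:ℝ) ≤ r / (2 * Real.sqrt u * Real.sqrt (1 - u)) := by
      have : (0:ℝ) < 1 - u := by linarith
      positivity
    rw [abs_of_nonneg hdn, smul_eq_mul]
    have hgp : craigG (craigPhi (u, r)) = Real.exp (-r ^ 2 / 2) := by
      rw [craigPhi, craigG]
      congr 1
      simp only [mul_pow, Real.sq_sqrt hu0.le, Real.sq_sqrt (by linarith : (0:ℝ) ≤ 1 - u)]
      ring
    rw [hgp, craigF]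
    ring
  have hFint : IntegrableOn craigF s := by
    have h := (integrableOn_image_iff_integrableOn_abs_det_fderiv_smul volume hs hf' hinj
      craigG).mp (himage ▸ hprodint)
    exact (h.congr_fun hcongr hs)
  have keyL : (∫ t in Set.Ioi y, Real.exp (-t ^ 2 / 2)) * (Real.sqrt (2 * Real.pi) / 2) =
      ∫ q in s, craigF q := by
    calc (∫ t in Set.Ioi y, Real.exp (-t ^ 2 / 2)) * (Real.sqrt (2 * Real.pi) / 2)
        = ∫ p in Set.Ioi y ×ˢ Set.Ioi (0:ℝ), craigG p := hglhs.symm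
      _ = ∫ q in s, |(craigPhiD q).det| • craigG (craigPhi q) := by rw [← himage]; exact key
      _ = ∫ q in s, craigF q := setIntegral_congr_fun hs hcongr
  have hFind : Integrable (s.indicator craigF) := (integrable_indicator_iff hs).mpr hFint
  have hiter : ∫ q in s, craigF q = ∫ u : ℝ, ∫ r : ℝ, s.indicator craigF (u, r) := by
    rw [← integral_indicator hs, Measure.volume_eq_prod]
    exact integral_prod _ (by rwa [← Measure.volume_eq_prod])
  have hinner : ∀ u : ℝ, (∫ r : ℝ, s.indicator craigF (u, r)) =
      (Set.Ioo (0:ℝ) 1).indicator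
        (fun u => Real.exp (-y ^ 2 / (2 * u)) / (2 * Real.sqrt u * Real.sqrt (1 - u))) u := by
    intro u
    by_cases hu : u ∈ Set.Ioo (0:ℝ) 1
    · obtain ⟨hu0, hu1⟩ := hu
      have hh : 0 < Real.sqrt u := Real.sqrt_pos.mpr hu0
      have heq : ∀ r : ℝ, s.indicator craigF (u, r) =
          (Set.Ioi (y / Real.sqrt u)).indicator
            (fun r => r * Real.exp (-r ^ 2 / 2) / (2 * Real.sqrt u * Real.sqrt (1 - u))) r := by
        intro r
        have hmem : (u, r) ∈ s ↔ r ∈ Set.Ioi (y / Real.sqrt u) := by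
          simp only [hs_def, Set.mem_setOf_eq, Set.mem_Ioi]
          constructor
          · rintro ⟨-, h⟩; exact (div_lt_iff₀ hh).mpr h
          · intro h; exact ⟨⟨hu0, hu1⟩, (div_lt_iff₀ hh).mp h⟩
        by_cases h : (u, r) ∈ s
        · rw [Set.indicator_of_mem h, Set.indicator_of_mem (hmem.mp h)]
          rfl
        · rw [Set.indicator_of_notMem h,
            Set.indicator_of_notMem (fun hc => h (hmem.mpr hc))]
      rw [Set.indicator_of_mem (show u ∈ Set.Ioo (0:ℝ) 1 from ⟨hu0, hu1⟩)]
      simp_rw [heq]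
      rw [integral_indicator measurableSet_Ioi, integral_div, lemA]
      congr 2
      rw [div_pow, Real.sq_sqrt hu0.le]
      ring
    · have h0 : ∀ r : ℝ, s.indicator craigF (u, r) = 0 := by
        intro r
        apply Set.indicator_of_notMem
        intro hc
        exact hu ⟨hc.1.1, hc.1.2⟩
      simp_rw [h0]
      rw [integral_zero, Set.indicator_of_notMem hu]
  have hIoo : ∫ q in s, craigF q = ∫ u in Set.Ioo (0:ℝ) 1,
      Real.exp (-y ^ 2 / (2 * u)) / (2 * Real.sqrt u * Real.sqrt (1 - u)) := by
    rw [hiter]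
    simp_rw [hinner]
    rw [integral_indicator measurableSet_Ioo]
  have hhalf : ∫ u in Set.Ioo (0:ℝ) 1,
      Real.exp (-y ^ 2 / (2 * u)) / (2 * Real.sqrt u * Real.sqrt (1 - u)) =
      (∫ u in Set.Ioo (0:ℝ) 1,
        Real.exp (-y ^ 2 / (2 * u)) / (Real.sqrt u * Real.sqrt (1 - u))) / 2 := by
    rw [← integral_div]
    refine setIntegral_congr_fun measurableSet_Ioo fun u _ => ?_
    ring
  have hfin := keyL.trans (hIoo.trans hhalf)
  have hs2 : (0:ℝ) < Real.sqrt (2 * Real.pi) := Real.sqrt_pos.mpr (by positivity)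
  rw [inv_mul_eq_div, eq_div_iff hs2.ne']
  linear_combination 2 * hfin

lemma Ibeta : IntegrableOn (fun u : ℝ => u ^ (-(1:ℝ)/2) * (1 - u) ^ (-(1:ℝ)/2))
    (Set.Ioo (0:ℝ) 1) := by
  have hc := Complex.betaIntegral_convergent (u := 1/2) (v := 1/2) (by norm_num) (by norm_num)
  have hn := hc.norm
  rw [intervalIntegrable_iff_integrableOn_Ioo_of_le (by norm_num : (0:ℝ) ≤ 1)] at hn
  refine hn.congr_fun ?_ measurableSet_Ioo
  intro x hx
  obtain ⟨hx0, hx1⟩ := hx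
  simp only [norm_mul]
  rw [show (1 : ℂ) - (x:ℂ) = ((1 - x : ℝ) : ℂ) by push_cast; ring]
  rw [Complex.norm_cpow_eq_rpow_re_of_pos hx0, Complex.norm_cpow_eq_rpow_re_of_pos (by linarith)]
  norm_num

lemma sqrt_inv_eq {u : ℝ} (h0 : 0 < u) (h1 : u < 1) :
    (Real.sqrt u * Real.sqrt (1 - u))⁻¹ = u ^ (-(1:ℝ)/2) * (1 - u) ^ (-(1:ℝ)/2) := by
  rw [mul_inv, Real.sqrt_eq_rpow, Real.sqrt_eq_rpow,
    ← Real.rpow_neg h0.le, ← Real.rpow_neg (by linarith)]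
  norm_num

lemma alg {a p u : ℝ} (ha : 0 < a) (hp : 0 < p) (h0 : 0 < u) (h1 : u < 1) (b : ℝ) :
    (1/(a + p/(2*u)))^b * (Real.sqrt u * Real.sqrt (1-u))⁻¹
      = (2/p)^b * (u^(b-1/2) * (1-u)^(-(1:ℝ)/2) * (1+(2*a/p)*u)^(-b)) := by
  have hcu : (0:ℝ) < 1 + (2*a/p)*u := by positivity
  have h1u : (0:ℝ) < 1 - u := by linarith
  have e1 : 1/(a + p/(2*u)) = (2/p) * u * (1 + (2*a/p)*u)⁻¹ := by
    field_simp
    ring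
  have sie : (Real.sqrt u * Real.sqrt (1-u))⁻¹ = u ^ (-(1:ℝ)/2) * (1 - u) ^ (-(1:ℝ)/2) := by
    rw [mul_inv, Real.sqrt_eq_rpow, Real.sqrt_eq_rpow,
      ← Real.rpow_neg h0.le, ← Real.rpow_neg h1u.le]
    norm_num
  rw [e1, sie, Real.mul_rpow (by positivity) (by positivity),
    Real.mul_rpow (by positivity) h0.le, Real.inv_rpow hcu.le, ← Real.rpow_neg hcu.le,
    show b - 1/2 = b + (-(1:ℝ)/2) by ring, Real.rpow_add h0]
  ring

end CraigHelpers

open MeasureTheory Real intervalIntegral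

theorem stmt12 (a b p : ℝ) (ha : 0 < a) (hb : 0 < b) (hp : 0 < p) :
    (∫ x in Set.Ioi (0 : ℝ),
        gaussQ (Real.sqrt (p * x)) * (a ^ b * x ^ (b - 1) * Real.exp (-(a * x)) / Real.Gamma b)) =
      (1 / (2 * Real.pi)) * a ^ b * (2 / p) ^ b *
        ∫ u in (0 : ℝ)..1,
          u ^ (b - 1 / 2) * (1 - u) ^ (-(1 : ℝ) / 2) * (1 + (2 * a / p) * u) ^ (-b) := by
  classical
  set T : ℝ × ℝ → ℝ := fun q =>
    Real.exp (-(p * q.1) / (2 * q.2)) / (Real.sqrt q.2 * Real.sqrt (1 - q.2)) *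
      (q.1 ^ (b - 1) * Real.exp (-(a * q.1))) with hT_def
  have hGamma_pos : 0 < Real.Gamma b := Real.Gamma_pos_of_pos hb
  -- Step 1: pointwise Craig
  have step1 : ∀ x ∈ Set.Ioi (0:ℝ),
      gaussQ (Real.sqrt (p * x)) * (a ^ b * x ^ (b - 1) * Real.exp (-(a * x)) / Real.Gamma b) =
        ((2 * Real.pi)⁻¹ * (a ^ b / Real.Gamma b)) * ∫ u in Set.Ioo (0:ℝ) 1, T (x, u) := by
    intro x hx
    rw [Set.mem_Ioi] at hx
    have hpx : 0 < p * x := by positivity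
    have hy : 0 < Real.sqrt (p * x) := Real.sqrt_pos.mpr hpx
    have hJ : ∫ u in Set.Ioo (0:ℝ) 1, T (x, u) =
        (∫ u in Set.Ioo (0:ℝ) 1,
          Real.exp (-(p * x) / (2 * u)) / (Real.sqrt u * Real.sqrt (1 - u))) *
          (x ^ (b - 1) * Real.exp (-(a * x))) := by
      rw [← MeasureTheory.integral_mul_const]
    rw [gaussQ, craig hy]
    simp only [Real.sq_sqrt hpx.le]
    rw [hJ]
    have h2π : (Real.sqrt (2 * Real.pi))⁻¹ * (Real.sqrt (2 * Real.pi))⁻¹ = (2 * Real.pi)⁻¹ := by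
      rw [← mul_inv, Real.mul_self_sqrt (by positivity)]
    rw [← h2π]
    ring
  rw [setIntegral_congr_fun measurableSet_Ioi step1, MeasureTheory.integral_const_mul]
  -- Integrability for Fubini
  have hGamInt : IntegrableOn (fun x : ℝ => x ^ (b - 1) * Real.exp (-(a * x)))
      (Set.Ioi (0:ℝ)) := by
    have h := integrableOn_rpow_mul_exp_neg_mul_rpow (s := b - 1) (p := 1) (b := a)
      (by linarith) one_pos ha
    exact h.congr_fun (fun x hx => by simp only [Real.rpow_one]; ring_nf) measurableSet_Ioi
  have hD : MeasurableSet (Set.Ioi (0:ℝ) ×ˢ Set.Ioo (0:ℝ) 1) :=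
    measurableSet_Ioi.prod measurableSet_Ioo
  have hTcont : ContinuousOn T (Set.Ioi (0:ℝ) ×ˢ Set.Ioo (0:ℝ) 1) := by
    apply ContinuousOn.mul
    · apply ContinuousOn.div
      · exact Real.continuous_exp.comp_continuousOn
          (((continuous_const.mul continuous_fst).neg.continuousOn).div
            ((continuous_const.mul continuous_snd).continuousOn)
            (fun q hq => by have := hq.2.1; positivity))
      · exact ((Real.continuous_sqrt.comp continuous_snd).mul
          (Real.continuous_sqrt.comp (continuous_const.sub continuous_snd))).continuousOn
      · rintro ⟨x, u⟩ hq
        have h0 : 0 < u := hq.2.1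
        have h1 : u < 1 := hq.2.2
        have : (0:ℝ) < 1 - u := by linarith
        positivity
    · exact (continuous_fst.continuousOn.rpow_const
        (fun q hq => Or.inl (ne_of_gt hq.1))).mul
        (Real.continuous_exp.comp (continuous_const.mul continuous_fst).neg).continuousOn
  have hTsm : AEStronglyMeasurable T
      ((volume.restrict (Set.Ioi (0:ℝ))).prod (volume.restrict (Set.Ioo (0:ℝ) 1))) := by
    rw [Measure.prod_restrict, ← Measure.volume_eq_prod]
    exact hTcont.aestronglyMeasurable hD
  have hTae : ∀ᵐ x ∂(volume.restrict (Set.Ioi (0:ℝ))),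
      Integrable (fun u => T (x, u)) (volume.restrict (Set.Ioo (0:ℝ) 1)) := by
    filter_upwards [ae_restrict_mem measurableSet_Ioi] with x hx
    rw [Set.mem_Ioi] at hx
    have hC : 0 ≤ x ^ (b - 1) * Real.exp (-(a * x)) := by positivity
    refine Integrable.mono' (Ibeta.const_mul (x ^ (b - 1) * Real.exp (-(a * x)))) ?_ ?_
    · apply ContinuousOn.aestronglyMeasurable ?_ measurableSet_Ioo
      simp only [hT_def]
      apply ContinuousOn.mul ?_ continuousOn_const
      apply ContinuousOn.div
      · exact Real.continuous_exp.comp_continuousOn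
          (continuousOn_const.div (continuous_const.mul continuous_id).continuousOn
            (fun u hu => by have := hu.1; simp only [Set.mem_Ioo] at *; positivity))
      · exact (Real.continuous_sqrt.mul
          (Real.continuous_sqrt.comp (continuous_const.sub continuous_id))).continuousOn
      · intro u hu
        have h0 : 0 < u := hu.1
        have h1 : (0:ℝ) < 1 - u := by linarith [hu.2]
        positivity
    · filter_upwards [ae_restrict_mem measurableSet_Ioo] with u hu
      obtain ⟨h0, h1⟩ := hu
      have h1u : (0:ℝ) < 1 - u := by linarith
      have hTnn : 0 ≤ T (x, u) := by
        simp only [hT_def]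
        positivity
      rw [Real.norm_of_nonneg hTnn]
      simp only [hT_def]
      rw [← sqrt_inv_eq h0 h1, mul_comm (x ^ (b-1) * Real.exp (-(a*x)))]
      rw [div_eq_mul_inv]
      apply mul_le_mul_of_nonneg_right _ hC
      have : Real.exp (-(p * x) / (2 * u)) ≤ 1 := by
        rw [Real.exp_le_one_iff, neg_div, neg_nonpos]
        positivity
      calc Real.exp (-(p * x) / (2 * u)) * (Real.sqrt u * Real.sqrt (1 - u))⁻¹
          ≤ 1 * (Real.sqrt u * Real.sqrt (1 - u))⁻¹ := by
            apply mul_le_mul_of_nonneg_right this (by positivity)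
        _ = (Real.sqrt u * Real.sqrt (1 - u))⁻¹ := one_mul _
  have hTnormint : Integrable
      (fun x => ∫ u, ‖T (x, u)‖ ∂(volume.restrict (Set.Ioo (0:ℝ) 1)))
      (volume.restrict (Set.Ioi (0:ℝ))) := by
    set B : ℝ := ∫ u in Set.Ioo (0:ℝ) 1, u ^ (-(1:ℝ)/2) * (1 - u) ^ (-(1:ℝ)/2) with hB_def
    refine Integrable.mono' (hGamInt.mul_const B) (hTsm.norm.integral_prod_right') ?_
    filter_upwards [ae_restrict_mem measurableSet_Ioi] with x hx
    rw [Set.mem_Ioi] at hx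
    have hC : 0 ≤ x ^ (b - 1) * Real.exp (-(a * x)) := by positivity
    have hle : ∫ u, ‖T (x, u)‖ ∂(volume.restrict (Set.Ioo (0:ℝ) 1)) ≤
        (x ^ (b - 1) * Real.exp (-(a * x))) * B := by
      rw [hB_def, ← MeasureTheory.integral_const_mul]
      apply integral_mono_of_nonneg
      · filter_upwards with u; exact norm_nonneg _
      · exact Ibeta.const_mul _
      · filter_upwards [ae_restrict_mem measurableSet_Ioo] with u hu
        obtain ⟨h0, h1⟩ := hu
        have h1u : (0:ℝ) < 1 - u := by linarith
        have hTnn : 0 ≤ T (x, u) := by simp only [hT_def]; positivity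
        rw [Real.norm_of_nonneg hTnn]
        simp only [hT_def]
        rw [← sqrt_inv_eq h0 h1]
        have hexp : Real.exp (-(p * x) / (2 * u)) ≤ 1 := by
          rw [Real.exp_le_one_iff, neg_div, neg_nonpos]
          positivity
        rw [div_eq_mul_inv, mul_comm (x ^ (b - 1) * Real.exp (-(a * x)))]
        apply mul_le_mul_of_nonneg_right _ hC
        calc Real.exp (-(p * x) / (2 * u)) * (Real.sqrt u * Real.sqrt (1 - u))⁻¹
            ≤ 1 * (Real.sqrt u * Real.sqrt (1 - u))⁻¹ := by
              apply mul_le_mul_of_nonneg_right hexp (by positivity)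
          _ = (Real.sqrt u * Real.sqrt (1 - u))⁻¹ := one_mul _
    have hnn : 0 ≤ ∫ u, ‖T (x, u)‖ ∂(volume.restrict (Set.Ioo (0:ℝ) 1)) :=
      integral_nonneg fun u => norm_nonneg _
    rw [Real.norm_of_nonneg hnn]
    exact hle
  have hTint : Integrable (Function.uncurry fun x u => T (x, u))
      ((volume.restrict (Set.Ioi (0:ℝ))).prod (volume.restrict (Set.Ioo (0:ℝ) 1))) :=
    (integrable_prod_iff hTsm).mpr ⟨hTae, hTnormint⟩
  have hswap : (∫ x in Set.Ioi (0:ℝ), ∫ u in Set.Ioo (0:ℝ) 1, T (x, u)) =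
      ∫ u in Set.Ioo (0:ℝ) 1, ∫ x in Set.Ioi (0:ℝ), T (x, u) :=
    integral_integral_swap hTint
  rw [hswap]
  -- inner evaluation
  have hinner : ∀ u ∈ Set.Ioo (0:ℝ) 1,
      (∫ x in Set.Ioi (0:ℝ), T (x, u)) =
        Real.Gamma b * ((2/p)^b *
          (u^(b-1/2) * (1-u)^(-(1:ℝ)/2) * (1+(2*a/p)*u)^(-b))) := by
    intro u hu
    obtain ⟨h0, h1⟩ := hu
    have hc : 0 < a + p / (2 * u) := by positivity
    have e1 : (∫ x in Set.Ioi (0:ℝ), T (x, u)) =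
        (∫ x in Set.Ioi (0:ℝ), x ^ (b - 1) * Real.exp (-((a + p / (2 * u)) * x))) *
          (Real.sqrt u * Real.sqrt (1 - u))⁻¹ := by
      rw [← MeasureTheory.integral_mul_const]
      refine setIntegral_congr_fun measurableSet_Ioi fun x hx => ?_
      simp only [hT_def]
      rw [show -((a + p / (2 * u)) * x) = -(p * x) / (2 * u) + -(a * x) by
        field_simp; ring, Real.exp_add]
      ring
    rw [e1, Real.integral_rpow_mul_exp_neg_mul_Ioi hb hc, mul_comm ((1 / (a + p / (2*u))) ^ b),
      mul_assoc, alg ha hp h0 h1 b]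
  rw [setIntegral_congr_fun measurableSet_Ioo hinner, MeasureTheory.integral_const_mul, MeasureTheory.integral_const_mul]
  have hIoo : ∫ u in (0:ℝ)..1,
      u ^ (b - 1 / 2) * (1 - u) ^ (-(1 : ℝ) / 2) * (1 + (2 * a / p) * u) ^ (-b) =
      ∫ u in Set.Ioo (0:ℝ) 1,
      u ^ (b - 1 / 2) * (1 - u) ^ (-(1 : ℝ) / 2) * (1 + (2 * a / p) * u) ^ (-b) := by
    rw [intervalIntegral.integral_of_le (by norm_num), integral_Ioc_eq_integral_Ioo]
  rw [hIoo]
  set I := ∫ u in Set.Ioo (0:ℝ) 1,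
    u ^ (b - 1 / 2) * (1 - u) ^ (-(1 : ℝ) / 2) * (1 + (2 * a / p) * u) ^ (-b)
  field_simp
end

section
/- Let a > 0, b > 0 and let γ be Gamma-distributed with shape b and rate a. Then p^b · E[Q(√(p γ))] → (1/(2√π)) (2a)^b Γ(1/2 + b)/Γ(1 + b) as p → ∞. In particular, E[Q(√(pγ))] ~ C p^{-b} for an explicit constant C. -/
open MeasureTheory Real Filter

/-!
Substituting `y = p x` turns `p ^ b * E[Q(√(p γ))]` into
`a ^ b / Γ(b) * ∫₀^∞ Q(√y) y ^ (b - 1) e ^ (-(a / p) y) dy`. Since `Q(√y) ≤ √2 e ^ (-y / 4)`,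
dominated convergence lets `p → ∞` under the integral, leaving `∫₀^∞ Q(√y) y ^ (b - 1) dy`.
Integrating by parts against `y ^ b / b` (using `Q'(x) = -e ^ (-x² / 2) / √(2π)`) turns this into
the Gamma integral `∫₀^∞ y ^ (b - 1 / 2) e ^ (-y / 2) dy / (2 b √(2π))`.
-/

open Set Topology

lemma integrable_exp_neg_sq_div_two : Integrable fun t : ℝ => exp (-t ^ 2 / 2) := by
  simpa [neg_div, div_eq_inv_mul] using integrable_exp_neg_mul_sq (b := 1 / 2) (by norm_num)

lemma hasDerivAt_gaussQ (x : ℝ) :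
    HasDerivAt gaussQ (-((√(2 * π))⁻¹ * exp (-x ^ 2 / 2))) x := by
  have hf := integrable_exp_neg_sq_div_two
  have hQ : gaussQ = fun u => (√(2 * π))⁻¹ *
      ((∫ t in Ioi 0, exp (-t ^ 2 / 2)) - ∫ t in (0 : ℝ)..u, exp (-t ^ 2 / 2)) := by
    funext u
    rw [gaussQ, ← intervalIntegral.integral_Ioi_sub_Ioi' hf.integrableOn hf.integrableOn,
      sub_sub_cancel]
  have hcont : Continuous fun t : ℝ => exp (-t ^ 2 / 2) := by fun_prop
  rw [hQ]
  simpa using ((intervalIntegral.integral_hasDerivAt_right hf.intervalIntegrable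
    (hcont.stronglyMeasurableAtFilter _ _) hcont.continuousAt).const_sub _).const_mul
    (√(2 * π))⁻¹

lemma continuous_gaussQ : Continuous gaussQ :=
  continuous_iff_continuousAt.2 fun x => (hasDerivAt_gaussQ x).continuousAt

lemma gaussQ_nonneg (x : ℝ) : 0 ≤ gaussQ x :=
  mul_nonneg (inv_nonneg.2 (sqrt_nonneg _))
    (setIntegral_nonneg measurableSet_Ioi fun _ _ => (exp_pos _).le)

lemma gaussQ_le_sqrt_two_mul_exp {x : ℝ} (hx : 0 ≤ x) : gaussQ x ≤ √2 * exp (-x ^ 2 / 4) := by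
  have hint : Integrable fun t : ℝ => exp (-(1 / 4) * t ^ 2) :=
    integrable_exp_neg_mul_sq (by norm_num)
  -- `t ^ 2 / 2 ≥ x ^ 2 / 4 + t ^ 2 / 4` on the tail `t > x ≥ 0`
  have htail : (∫ t in Ioi x, exp (-t ^ 2 / 2)) ≤
      ∫ t in Ioi x, exp (-x ^ 2 / 4) * exp (-(1 / 4) * t ^ 2) := by
    refine setIntegral_mono_on integrable_exp_neg_sq_div_two.integrableOn
      (hint.integrableOn.const_mul _) measurableSet_Ioi fun t (ht : x < t) => ?_
    rw [← exp_add, exp_le_exp]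
    nlinarith
  have hwhole : (∫ t in Ioi x, exp (-(1 / 4) * t ^ 2)) ≤ √2 * √(2 * π) := by
    calc (∫ t in Ioi x, exp (-(1 / 4) * t ^ 2)) ≤ ∫ t, exp (-(1 / 4) * t ^ 2) :=
          setIntegral_le_integral hint (.of_forall fun _ => (exp_pos _).le)
      _ = √2 * √(2 * π) := by
          rw [integral_gaussian, ← sqrt_mul zero_le_two]
          congr 1
          ring
  calc gaussQ x
      ≤ (√(2 * π))⁻¹ * (exp (-x ^ 2 / 4) * ∫ t in Ioi x, exp (-(1 / 4) * t ^ 2)) := by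
        rw [gaussQ, ← integral_const_mul (exp (-x ^ 2 / 4))]
        exact mul_le_mul_of_nonneg_left htail (by positivity)
    _ ≤ (√(2 * π))⁻¹ * (exp (-x ^ 2 / 4) * (√2 * √(2 * π))) := by gcongr
    _ = √2 * exp (-x ^ 2 / 4) := by field_simp

lemma gaussQ_sqrt_le {y : ℝ} (hy : 0 ≤ y) : gaussQ √y ≤ √2 * exp (-(1 / 4 * y)) := by
  simpa [sq_sqrt hy, neg_div, div_eq_inv_mul] using gaussQ_le_sqrt_two_mul_exp (sqrt_nonneg y)

lemma integrableOn_rpow_mul_exp_neg_mul {s r : ℝ} (hs : -1 < s) (hr : 0 < r) :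
    IntegrableOn (fun x : ℝ => x ^ s * exp (-(r * x))) (Ioi 0) := by
  simpa [rpow_one] using integrableOn_rpow_mul_exp_neg_mul_rpow hs one_pos hr

lemma integrableOn_gaussQ_sqrt_mul_rpow {b : ℝ} (hb : 0 < b) :
    IntegrableOn (fun y : ℝ => gaussQ √y * y ^ (b - 1)) (Ioi 0) := by
  refine ((integrableOn_rpow_mul_exp_neg_mul (s := b - 1) (r := 1 / 4) (by linarith)
    (by norm_num)).const_mul √2).mono' ?_ ?_
  · exact ((continuous_gaussQ.comp continuous_sqrt).continuousOn.mul
      fun y hy => (continuousAt_rpow_const y _ (.inl (ne_of_gt hy))).continuousWithinAt)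
      |>.aestronglyMeasurable measurableSet_Ioi
  · filter_upwards [ae_restrict_mem measurableSet_Ioi] with y (hy : 0 < y)
    rw [norm_of_nonneg (by have := gaussQ_nonneg √y; positivity)]
    calc gaussQ √y * y ^ (b - 1) ≤ √2 * exp (-(1 / 4 * y)) * y ^ (b - 1) := by
          gcongr
          exact gaussQ_sqrt_le hy.le
      _ = √2 * (y ^ (b - 1) * exp (-(1 / 4 * y))) := by ring

lemma hasDerivAt_gaussQ_sqrt_mul_rpow_div {b y : ℝ} (hb : b ≠ 0) (hy : 0 < y) :
    HasDerivAt (fun y => gaussQ √y * y ^ b / b)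
      (gaussQ √y * y ^ (b - 1) -
        (√(2 * π))⁻¹ / (2 * b) * (y ^ (b + 1 / 2 - 1) * exp (-(1 / 2 * y)))) y := by
  have hQ := (hasDerivAt_gaussQ √y).comp y (hasDerivAt_sqrt hy.ne')
  have hpow : HasDerivAt (fun y : ℝ => y ^ b) (b * y ^ (b - 1)) y :=
    hasDerivAt_rpow_const (.inl hy.ne')
  refine ((hQ.mul hpow).div_const b).congr_deriv ?_
  have hsqrt : y ^ (b + 1 / 2 - 1) = y ^ b / √y := by
    rw [sqrt_eq_rpow, ← rpow_sub hy]
    congr 1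
    ring
  rw [sq_sqrt hy.le, hsqrt, Function.comp_apply]
  have : √y ≠ 0 := (sqrt_pos.2 hy).ne'
  field_simp
  ring

lemma integral_gaussQ_sqrt_mul_rpow {b : ℝ} (hb : 0 < b) :
    ∫ y in Ioi 0, gaussQ √y * y ^ (b - 1) = 2 ^ b * Gamma (b + 1 / 2) / (2 * b * √π) := by
  have hGamma := integrableOn_rpow_mul_exp_neg_mul (s := b + 1 / 2 - 1) (r := 1 / 2)
    (by linarith) (by norm_num)
  have hcont : ContinuousWithinAt (fun y => gaussQ √y * y ^ b / b) (Ici 0) 0 :=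
    (((continuous_gaussQ.comp continuous_sqrt).continuousAt.mul
      (continuousAt_rpow_const 0 b (.inr hb.le))).div_const b).continuousWithinAt
  have hlim : Tendsto (fun y => gaussQ √y * y ^ b / b) atTop (𝓝 0) := by
    refine squeeze_zero' ?_ ?_
      (by simpa only [mul_zero] using (tendsto_rpow_mul_exp_neg_mul_atTop_nhds_zero b (1 / 4)
        (by norm_num)).const_mul (√2 / b))
    · filter_upwards [eventually_ge_atTop 0] with y hy
      have := gaussQ_nonneg √y
      positivity
    · filter_upwards [eventually_ge_atTop 0] with y hy
      calc gaussQ √y * y ^ b / b ≤ √2 * exp (-(1 / 4 * y)) * y ^ b / b := by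
            gcongr
            exact gaussQ_sqrt_le hy
        _ = √2 / b * (y ^ b * exp (-(1 / 4) * y)) := by rw [neg_mul]; ring
  have hIBP := integral_Ioi_of_hasDerivAt_of_tendsto hcont
    (fun y hy => hasDerivAt_gaussQ_sqrt_mul_rpow_div hb.ne' hy)
    ((integrableOn_gaussQ_sqrt_mul_rpow hb).sub (hGamma.const_mul _)) hlim
  rw [integral_sub (integrableOn_gaussQ_sqrt_mul_rpow hb) (hGamma.const_mul _),
    integral_const_mul, integral_rpow_mul_exp_neg_mul_Ioi (by linarith) (by norm_num),
    sqrt_zero, zero_rpow hb.ne', mul_zero, zero_div, sub_zero, sub_eq_zero] at hIBP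
  rw [hIBP, one_div_one_div, rpow_add two_pos, ← sqrt_eq_rpow, sqrt_mul zero_le_two]
  field_simp

lemma tendsto_setIntegral_mul_exp_neg_mul_nhdsGE_zero {f : ℝ → ℝ}
    (hf : IntegrableOn f (Ioi 0)) :
    Tendsto (fun s => ∫ y in Ioi 0, f y * exp (-(s * y))) (𝓝[≥] 0)
      (𝓝 (∫ y in Ioi 0, f y)) := by
  refine tendsto_integral_filter_of_dominated_convergence (fun y => ‖f y‖)
    (.of_forall fun s =>
      hf.aestronglyMeasurable.mul (by fun_prop : Continuous _).aestronglyMeasurable)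
    ?_ hf.norm ?_
  · filter_upwards [self_mem_nhdsWithin] with s (hs : 0 ≤ s)
    filter_upwards [ae_restrict_mem measurableSet_Ioi] with y (hy : 0 < y)
    rw [norm_mul, norm_of_nonneg (exp_pos _).le]
    exact mul_le_of_le_one_right (norm_nonneg _) (exp_le_one_iff.2 (by nlinarith))
  · refine .of_forall fun y => tendsto_nhdsWithin_of_tendsto_nhds ?_
    simpa using ((continuous_const.mul (by fun_prop : Continuous fun s : ℝ => exp (-(s * y))))
      |>.tendsto 0 (f := fun s => f y * exp (-(s * y))))

lemma rpow_mul_setIntegral_comp_mul_gamma_density (g : ℝ → ℝ) {a b p : ℝ} (hp : 0 < p) :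
    p ^ b * ∫ x in Ioi 0, g (p * x) * (a ^ b * x ^ (b - 1) * exp (-(a * x)) / Gamma b) =
      a ^ b / Gamma b * ∫ y in Ioi 0, g y * y ^ (b - 1) * exp (-(a / p * y)) := by
  have hsubst := integral_comp_mul_left_Ioi
    (fun y => g y * (a ^ b * (y / p) ^ (b - 1) * exp (-(a * (y / p))) / Gamma b)) 0 hp
  simp only [mul_zero, mul_div_cancel_left₀ _ hp.ne'] at hsubst
  rw [hsubst, smul_eq_mul, ← mul_assoc, ← div_eq_mul_inv, ← rpow_sub_one hp.ne',
    ← integral_const_mul, ← integral_const_mul]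
  refine setIntegral_congr_fun measurableSet_Ioi fun y (hy : 0 < y) => ?_
  rw [div_rpow hy.le hp.le]
  have := (rpow_pos_of_pos hp (b - 1)).ne'
  field_simp

theorem stmt13 (a b : ℝ) (ha : 0 < a) (hb : 0 < b) :
    Tendsto
      (fun p : ℝ =>
        p ^ b * ∫ x in Set.Ioi (0 : ℝ),
          gaussQ (Real.sqrt (p * x)) * (a ^ b * x ^ (b - 1) * Real.exp (-(a * x)) / Real.Gamma b))
      atTop
      (nhds ((1 / (2 * Real.sqrt Real.pi)) * (2 * a) ^ b *
        (Real.Gamma (1 / 2 + b) / Real.Gamma (1 + b)))) := by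
  have hscale : Tendsto (fun p => a / p) atTop (𝓝[≥] 0) :=
    tendsto_nhdsWithin_iff.2 ⟨tendsto_const_nhds.div_atTop tendsto_id,
      eventually_ge_atTop 0 |>.mono fun p hp => div_nonneg ha.le hp⟩
  have hlim := ((tendsto_setIntegral_mul_exp_neg_mul_nhdsGE_zero
    (integrableOn_gaussQ_sqrt_mul_rpow hb)).comp hscale).const_mul (a ^ b / Gamma b)
  have hconst : a ^ b / Gamma b * (2 ^ b * Gamma (b + 1 / 2) / (2 * b * √π)) =
      1 / (2 * √π) * (2 * a) ^ b * (Gamma (1 / 2 + b) / Gamma (1 + b)) := by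
    rw [add_comm 1 b, Gamma_add_one hb.ne', mul_rpow zero_le_two ha.le, add_comm (1 / 2)]
    have := (Gamma_pos_of_pos hb).ne'
    field_simp
  rw [integral_gaussQ_sqrt_mul_rpow hb, hconst] at hlim
  refine hlim.congr' ?_
  filter_upwards [eventually_gt_atTop 0] with p hp
  exact (rpow_mul_setIntegral_comp_mul_gamma_density (fun y => gaussQ √y) hp).symm
end
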